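/- arXiv:2112.05119 — 5 statements merged into one kernel-verified Lean document; each statement's English description precedes it below -/
import Mathlib

section
/- Let γ : [a,b] → B(H) be a continuously differentiable curve such that each γ(t) is a partial isometry and each γ′(t) = iAγ(t) − iγ(t)B for some selfadjoint A, B. Then the curves of initial and final projections t ↦ γ(t)*γ(t) and t ↦ γ(t)γ(t)* are continuously differentiable curves of orthogonal projections joining γ(a)*γ(a) to γ(b)*γ(b), respectively γ(a)γ(a)* to γ(b)γ(b)*, and their operator-norm lengths satisfy ℓ_∞(t ↦ γ(t)*γ(t)) ≤ ℓ(γ) and ℓ_∞(t ↦ γ(t)γ(t)*) ≤ ℓ(γ). Consequently the maps α(V) = V*V and ω(V) = VV* decrease the corresponding path-infimum distances. -/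
open Set

variable {H : Type*} [NormedAddCommGroup H] [InnerProductSpace ℂ H] [CompleteSpace H]

/-- The quotient Finsler norm of a tangent vector `W` at a partial isometry `V`:
`|W|_V = inf { max(‖A‖,‖B‖) : A,B selfadjoint, iAV − iVB = W }`. -/
noncomputable def finslerNorm (V W : H →L[ℂ] H) : ℝ :=
  sInf { r : ℝ | ∃ A B : H →L[ℂ] H, IsSelfAdjoint A ∧ IsSelfAdjoint B ∧
    Complex.I • (A * V) - Complex.I • (V * B) = W ∧ r = max ‖A‖ ‖B‖ }

section Aux

set_option linter.unusedSectionVars false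
set_option maxHeartbeats 1000000

local notation "⟪" x ", " y "⟫" => @inner ℂ _ _ x y

lemma aux_symm (P : H →L[ℂ] H) (hP : IsSelfAdjoint P) (u v : H) :
    ⟪P u, v⟫ = ⟪u, P v⟫ :=
  (ContinuousLinearMap.isSelfAdjoint_iff_isSymmetric.mp hP) u v

lemma aux_idem_apply (P : H →L[ℂ] H) (hP2 : P * P = P) (x : H) : P (P x) = P x := by
  have := DFunLike.congr_fun hP2 x
  simpa [ContinuousLinearMap.mul_apply] using this

lemma aux_apply_norm_le (P : H →L[ℂ] H) (hP : IsSelfAdjoint P) (hP2 : P * P = P) (x : H) :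
    ‖P x‖ ≤ ‖x‖ := by
  have h1 : ‖P x‖ ^ 2 = RCLike.re (⟪x, P x⟫) := by
    rw [← inner_self_eq_norm_sq (𝕜 := ℂ), aux_symm P hP x (P x), aux_idem_apply P hP2 x]
  have h2 : RCLike.re (⟪x, P x⟫) ≤ ‖x‖ * ‖P x‖ := re_inner_le_norm x (P x)
  nlinarith [norm_nonneg (P x), norm_nonneg x]

lemma aux_one_sub_sa (P : H →L[ℂ] H) (hP : IsSelfAdjoint P) : IsSelfAdjoint (1 - P) :=
  (IsSelfAdjoint.one _).sub hP

lemma aux_one_sub_idem (P : H →L[ℂ] H) (hP2 : P * P = P) :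
    (1 - P) * (1 - P) = 1 - P := by
  simp [sub_mul, mul_sub, hP2]

lemma aux_pythag (P : H →L[ℂ] H) (hP : IsSelfAdjoint P) (hP2 : P * P = P) (x : H) :
    ‖x‖ ^ 2 = ‖P x‖ ^ 2 + ‖x - P x‖ ^ 2 := by
  have h0 : ⟪P x, x - P x⟫ = 0 := by
    rw [aux_symm P hP x (x - P x)]
    simp [map_sub, aux_idem_apply P hP2 x]
  have hx : x = P x + (x - P x) := by abel
  calc ‖x‖ ^ 2 = ‖P x + (x - P x)‖ ^ 2 := by rw [← hx]
    _ = ‖P x‖ ^ 2 + 2 * RCLike.re (⟪P x, x - P x⟫) + ‖x - P x‖ ^ 2 :=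
        norm_add_sq (𝕜 := ℂ) _ _
    _ = ‖P x‖ ^ 2 + ‖x - P x‖ ^ 2 := by rw [h0]; simp

lemma aux_commutator_norm (P B : H →L[ℂ] H) (hP : IsSelfAdjoint P) (hP2 : P * P = P)
    (hB : IsSelfAdjoint B) : ‖B * P - P * B‖ ≤ ‖B‖ := by
  refine ContinuousLinearMap.opNorm_le_bound _ (norm_nonneg B) fun x => ?_
  set u := P x with hu
  set v := x - P x with hv
  set w := (B * P - P * B) x with hw
  have hwapp : w = B u - P (B x) := by
    rw [hw]; simp [ContinuousLinearMap.sub_apply, ContinuousLinearMap.mul_apply, hu]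
  have hBx : B x = B u + B v := by
    rw [hu, hv, ← map_add]; congr 1; abel
  have h1 : P w = - P (B v) := by
    rw [hwapp, map_sub, aux_idem_apply P hP2 (B x), hBx, map_add]
    abel
  have h2 : w - P w = B u - P (B u) := by
    rw [hwapp, map_sub, aux_idem_apply P hP2 (B x), hBx, map_add]
    abel
  have hb1 : ‖P w‖ ≤ ‖B‖ * ‖v‖ := by
    rw [h1, norm_neg]
    exact (aux_apply_norm_le P hP hP2 (B v)).trans (B.le_opNorm v)
  have hb2 : ‖w - P w‖ ≤ ‖B‖ * ‖u‖ := by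
    have e : B u - P (B u) = (1 - P) (B u) := by
      simp [ContinuousLinearMap.sub_apply]
    rw [h2, e]
    exact (aux_apply_norm_le (1 - P) (aux_one_sub_sa P hP) (aux_one_sub_idem P hP2)
      (B u)).trans (B.le_opNorm u)
  have hpyw : ‖w‖ ^ 2 = ‖P w‖ ^ 2 + ‖w - P w‖ ^ 2 := aux_pythag P hP hP2 w
  have hpyx : ‖x‖ ^ 2 = ‖u‖ ^ 2 + ‖v‖ ^ 2 := aux_pythag P hP hP2 x
  have e1 : ‖P w‖ ^ 2 ≤ ‖B‖ ^ 2 * ‖v‖ ^ 2 := by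
    nlinarith [norm_nonneg (P w), mul_nonneg (norm_nonneg B) (norm_nonneg v)]
  have e2 : ‖w - P w‖ ^ 2 ≤ ‖B‖ ^ 2 * ‖u‖ ^ 2 := by
    nlinarith [norm_nonneg (w - P w), mul_nonneg (norm_nonneg B) (norm_nonneg u)]
  have hsq : ‖w‖ ^ 2 ≤ (‖B‖ * ‖x‖) ^ 2 := by
    nlinarith [sq_nonneg ‖B‖]
  nlinarith [hsq, norm_nonneg w, mul_nonneg (norm_nonneg B) (norm_nonneg x)]

lemma aux_sa_idem_norm_le_one (P : H →L[ℂ] H) (hP : IsSelfAdjoint P) (hP2 : P * P = P) :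
    ‖P‖ ≤ 1 := by
  have h := CStarRing.norm_star_mul_self (x := P)
  rw [hP.star_eq, hP2] at h
  nlinarith [norm_nonneg P]

lemma aux_P_sa (V : H →L[ℂ] H) : IsSelfAdjoint (star V * V) := by
  simp [IsSelfAdjoint, star_mul]

lemma aux_Q_sa (V : H →L[ℂ] H) : IsSelfAdjoint (V * star V) := by
  simp [IsSelfAdjoint, star_mul]

section pi
variable (V : H →L[ℂ] H) (hV : V * star V * V = V)
include hV

lemma aux_hV' : star V * V * star V = star V := by
  have := congrArg star hV
  simpa [star_mul, ← mul_assoc] using this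

lemma aux_P_idem : (star V * V) * (star V * V) = star V * V := by
  calc (star V * V) * (star V * V) = star V * (V * star V * V) := by
        simp only [mul_assoc]
    _ = star V * V := by rw [hV]

lemma aux_Q_idem : (V * star V) * (V * star V) = V * star V := by
  rw [← mul_assoc, hV]

lemma aux_VP : V * (star V * V) = V := by rw [← mul_assoc, hV]

lemma aux_V_norm_le_one : ‖V‖ ≤ 1 := by
  have h := CStarRing.norm_star_mul_self (x := V)
  have h2 : ‖star V * V‖ ≤ 1 :=
    aux_sa_idem_norm_le_one _ (aux_P_sa V) (aux_P_idem V hV)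
  nlinarith [norm_nonneg V]

lemma aux_r3 (Z : H →L[ℂ] H) : V * (star V * (V * Z)) = V * Z := by
  rw [← mul_assoc, ← mul_assoc, hV]

lemma aux_r3' (Z : H →L[ℂ] H) : star V * (V * (star V * Z)) = star V * Z := by
  rw [← mul_assoc, ← mul_assoc, aux_hV' V hV]

end pi

lemma aux_norm3 (x y z : H →L[ℂ] H) (hx : ‖x‖ ≤ 1) (hz : ‖z‖ ≤ 1) :
    ‖x * y * z‖ ≤ ‖y‖ := by
  have h1 : ‖x * y * z‖ ≤ ‖x * y‖ * ‖z‖ := norm_mul_le _ _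
  have h2 : ‖x * y‖ ≤ ‖x‖ * ‖y‖ := norm_mul_le _ _
  nlinarith [norm_nonneg (x * y), norm_nonneg x, norm_nonneg y, norm_nonneg z,
    norm_nonneg (x * y * z)]

lemma aux_solve (V W X Y : H →L[ℂ] H) (hV : V * star V * V = V)
    (hX : IsSelfAdjoint X) (hY : IsSelfAdjoint Y)
    (hW : W = Complex.I • (X * V) - Complex.I • (V * Y)) :
    ∃ A B : H →L[ℂ] H, IsSelfAdjoint A ∧ IsSelfAdjoint B ∧
      Complex.I • (A * V) - Complex.I • (V * B) = W ∧ ‖A‖ ≤ 2 * ‖W‖ ∧ ‖B‖ ≤ 2 * ‖W‖ := by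
  have hVn : ‖V‖ ≤ 1 := aux_V_norm_le_one V hV
  have hVsn : ‖star V‖ ≤ 1 := by rw [norm_star]; exact hVn
  have h1Q : ‖(1 : H →L[ℂ] H) - V * star V‖ ≤ 1 :=
    aux_sa_idem_norm_le_one _ (aux_one_sub_sa _ (aux_Q_sa V))
      (aux_one_sub_idem _ (aux_Q_idem V hV))
  have h1P : ‖(1 : H →L[ℂ] H) - star V * V‖ ≤ 1 :=
    aux_sa_idem_norm_le_one _ (aux_one_sub_sa _ (aux_P_sa V))
      (aux_one_sub_idem _ (aux_P_idem V hV))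
  refine ⟨Complex.I • (V * star W * (1 - V * star V) - (1 - V * star V) * W * star V),
          Complex.I • (star V * W - (1 - star V * V) * star W * V), ?_, ?_, ?_, ?_, ?_⟩
  · rw [IsSelfAdjoint, star_smul]
    simp only [star_sub, star_mul, star_one, star_star, Complex.star_def, Complex.conj_I]
    rw [neg_smul, ← smul_neg, neg_sub]
    congr 1
  · rw [IsSelfAdjoint, star_smul]
    simp only [star_sub, star_mul, star_one, star_star, Complex.star_def, Complex.conj_I]
    rw [neg_smul, ← smul_neg, neg_sub]
    congr 1
    subst hW
    simp only [star_sub, star_smul, star_mul, star_star, Complex.star_def, Complex.conj_I,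
      hX.star_eq, hY.star_eq, sub_mul, mul_sub, one_mul, mul_one, smul_mul_assoc,
      mul_smul_comm, smul_sub, smul_smul, neg_smul, neg_sub, neg_neg, neg_mul, mul_neg,
      mul_assoc, aux_VP V hV, aux_r3 V hV, aux_r3' V hV]
    module
  · subst hW
    simp only [star_sub, star_smul, star_mul, star_one, star_star, Complex.star_def,
      Complex.conj_I, hX.star_eq, hY.star_eq, sub_mul, mul_sub, one_mul, mul_one,
      smul_mul_assoc, mul_smul_comm, smul_sub, smul_smul, neg_smul, neg_sub, neg_neg,
      neg_mul, mul_neg, mul_assoc, Complex.I_mul_I, neg_one_smul, one_smul,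
      aux_VP V hV, aux_r3 V hV, aux_r3' V hV]
    module
  · rw [norm_smul, Complex.norm_I, one_mul]
    refine (norm_sub_le _ _).trans ?_
    have n1 : ‖V * star W * (1 - V * star V)‖ ≤ ‖star W‖ := aux_norm3 _ _ _ hVn h1Q
    have n2 : ‖(1 - V * star V) * W * star V‖ ≤ ‖W‖ := aux_norm3 _ _ _ h1Q hVsn
    rw [norm_star] at n1
    linarith
  · rw [norm_smul, Complex.norm_I, one_mul]
    refine (norm_sub_le _ _).trans ?_
    have n1 : ‖star V * W‖ ≤ ‖W‖ := by
      have := norm_mul_le (star V) W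
      nlinarith [norm_nonneg W]
    have n2 : ‖(1 - star V * V) * star W * V‖ ≤ ‖star W‖ := aux_norm3 _ _ _ h1P hVn
    rw [norm_star] at n2
    linarith

lemma aux_tangent_initial_bound (V W A B : H →L[ℂ] H) (hV : V * star V * V = V)
    (hA : IsSelfAdjoint A) (hB : IsSelfAdjoint B)
    (heq : Complex.I • (A * V) - Complex.I • (V * B) = W) :
    ‖star W * V + star V * W‖ ≤ max ‖A‖ ‖B‖ := by
  have hid : star W * V + star V * W
      = Complex.I • (B * (star V * V) - star V * V * B) := by
    subst heq
    simp only [star_sub, star_smul, star_mul, star_one, star_star, Complex.star_def,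
      Complex.conj_I, hA.star_eq, hB.star_eq, sub_mul, mul_sub, add_mul, mul_add, one_mul,
      mul_one, smul_mul_assoc, mul_smul_comm, smul_sub, smul_add, smul_smul, neg_smul,
      neg_sub, neg_neg, neg_mul, mul_neg, mul_assoc, Complex.I_mul_I, neg_one_smul, one_smul]
    module
  rw [hid, norm_smul, Complex.norm_I, one_mul]
  exact le_trans
    (aux_commutator_norm (star V * V) B (aux_P_sa V) (aux_P_idem V hV) hB)
    (le_max_right _ _)

lemma aux_tangent_final_bound (V W A B : H →L[ℂ] H) (hV : V * star V * V = V)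
    (hA : IsSelfAdjoint A) (hB : IsSelfAdjoint B)
    (heq : Complex.I • (A * V) - Complex.I • (V * B) = W) :
    ‖W * star V + V * star W‖ ≤ max ‖A‖ ‖B‖ := by
  have hid : W * star V + V * star W
      = Complex.I • (A * (V * star V) - V * star V * A) := by
    subst heq
    simp only [star_sub, star_smul, star_mul, star_one, star_star, Complex.star_def,
      Complex.conj_I, hA.star_eq, hB.star_eq, sub_mul, mul_sub, add_mul, mul_add, one_mul,
      mul_one, smul_mul_assoc, mul_smul_comm, smul_sub, smul_add, smul_smul, neg_smul,
      neg_sub, neg_neg, neg_mul, mul_neg, mul_assoc, Complex.I_mul_I, neg_one_smul, one_smul]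
    module
  rw [hid, norm_smul, Complex.norm_I, one_mul]
  exact le_trans
    (aux_commutator_norm (V * star V) A (aux_Q_sa V) (aux_Q_idem V hV) hA)
    (le_max_left _ _)

/-- The defining set of `finslerNorm`. -/
def finslerSet (V W : H →L[ℂ] H) : Set ℝ :=
  { r : ℝ | ∃ A B : H →L[ℂ] H, IsSelfAdjoint A ∧ IsSelfAdjoint B ∧
    Complex.I • (A * V) - Complex.I • (V * B) = W ∧ r = max ‖A‖ ‖B‖ }

lemma finslerNorm_eq (V W : H →L[ℂ] H) : finslerNorm V W = sInf (finslerSet V W) := rfl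

lemma aux_bddBelow (V W : H →L[ℂ] H) : BddBelow (finslerSet V W) := by
  refine ⟨0, ?_⟩
  rintro r ⟨A, B, -, -, -, rfl⟩
  exact le_trans (norm_nonneg A) (le_max_left _ _)

lemma aux_nonempty (V W : H →L[ℂ] H)
    (h : ∃ X Y : H →L[ℂ] H, IsSelfAdjoint X ∧ IsSelfAdjoint Y ∧
      W = Complex.I • (X * V) - Complex.I • (V * Y)) :
    (finslerSet V W).Nonempty := by
  obtain ⟨X, Y, hX, hY, hW⟩ := h
  exact ⟨max ‖X‖ ‖Y‖, X, Y, hX, hY, hW.symm, rfl⟩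

lemma aux_finsler_le (V W A B : H →L[ℂ] H) (hA : IsSelfAdjoint A) (hB : IsSelfAdjoint B)
    (heq : Complex.I • (A * V) - Complex.I • (V * B) = W) :
    finslerNorm V W ≤ max ‖A‖ ‖B‖ :=
  csInf_le (aux_bddBelow V W) ⟨A, B, hA, hB, heq, rfl⟩

lemma aux_finsler_nonneg (V W : H →L[ℂ] H)
    (h : ∃ X Y : H →L[ℂ] H, IsSelfAdjoint X ∧ IsSelfAdjoint Y ∧
      W = Complex.I • (X * V) - Complex.I • (V * Y)) :
    0 ≤ finslerNorm V W := by
  refine le_csInf (aux_nonempty V W h) ?_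
  rintro r ⟨A, B, -, -, -, rfl⟩
  exact le_trans (norm_nonneg A) (le_max_left _ _)

lemma aux_finsler_le_two_norm (V W : H →L[ℂ] H) (hV : V * star V * V = V)
    (h : ∃ X Y : H →L[ℂ] H, IsSelfAdjoint X ∧ IsSelfAdjoint Y ∧
      W = Complex.I • (X * V) - Complex.I • (V * Y)) :
    finslerNorm V W ≤ 2 * ‖W‖ := by
  obtain ⟨X, Y, hX, hY, hW⟩ := h
  obtain ⟨A, B, hA, hB, heq, hAn, hBn⟩ := aux_solve V W X Y hV hX hY hW
  exact (aux_finsler_le V W A B hA hB heq).trans (max_le hAn hBn)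

lemma aux_finsler_ge_initial (V W : H →L[ℂ] H) (hV : V * star V * V = V)
    (h : ∃ X Y : H →L[ℂ] H, IsSelfAdjoint X ∧ IsSelfAdjoint Y ∧
      W = Complex.I • (X * V) - Complex.I • (V * Y)) :
    ‖star W * V + star V * W‖ ≤ finslerNorm V W := by
  refine le_csInf (aux_nonempty V W h) ?_
  rintro r ⟨A, B, hA, hB, heq, rfl⟩
  exact aux_tangent_initial_bound V W A B hV hA hB heq

lemma aux_finsler_ge_final (V W : H →L[ℂ] H) (hV : V * star V * V = V)
    (h : ∃ X Y : H →L[ℂ] H, IsSelfAdjoint X ∧ IsSelfAdjoint Y ∧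
      W = Complex.I • (X * V) - Complex.I • (V * Y)) :
    ‖W * star V + V * star W‖ ≤ finslerNorm V W := by
  refine le_csInf (aux_nonempty V W h) ?_
  rintro r ⟨A, B, hA, hB, heq, rfl⟩
  exact aux_tangent_final_bound V W A B hV hA hB heq

lemma aux_le_of_forall_pos (x y : ℝ) (h : ∀ ε : ℝ, 0 < ε → x ≤ y + ε) : x ≤ y := by
  by_contra hc
  push_neg at hc
  have := h ((x - y) / 2) (by linarith)
  linarith

lemma aux_key_est (V₁ W₁ V₂ W₂ : H →L[ℂ] H)
    (hV₂ : V₂ * star V₂ * V₂ = V₂)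
    (h₁ : ∃ X Y : H →L[ℂ] H, IsSelfAdjoint X ∧ IsSelfAdjoint Y ∧
      W₁ = Complex.I • (X * V₁) - Complex.I • (V₁ * Y))
    (h₂ : ∃ X Y : H →L[ℂ] H, IsSelfAdjoint X ∧ IsSelfAdjoint Y ∧
      W₂ = Complex.I • (X * V₂) - Complex.I • (V₂ * Y)) :
    finslerNorm V₂ W₂ ≤ finslerNorm V₁ W₁ + 2 * ‖W₂ - W₁‖
      + 4 * finslerNorm V₁ W₁ * ‖V₂ - V₁‖ := by
  refine aux_le_of_forall_pos _ _ fun ε' hε' => ?_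
  have hDpos : (0:ℝ) < 1 + 4 * ‖V₂ - V₁‖ := by positivity
  set ε := ε' / (1 + 4 * ‖V₂ - V₁‖) with hεdef
  have hε : 0 < ε := div_pos hε' hDpos
  have hεD : ε * (1 + 4 * ‖V₂ - V₁‖) = ε' := div_mul_cancel₀ _ (ne_of_gt hDpos)
  have hlt : sInf (finslerSet V₁ W₁) < finslerNorm V₁ W₁ + ε :=
    lt_add_of_pos_right _ hε
  obtain ⟨r, hrS, hrlt⟩ := exists_lt_of_csInf_lt (aux_nonempty V₁ W₁ h₁) hlt
  obtain ⟨A, B, hA, hB, heq1, rfl⟩ := hrS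
  set δ := W₂ - (Complex.I • (A * V₂) - Complex.I • (V₂ * B)) with hδdef
  obtain ⟨X₂, Y₂, hX₂, hY₂, hW₂⟩ := h₂
  have hδtan : δ = Complex.I • ((X₂ - A) * V₂) - Complex.I • (V₂ * (Y₂ - B)) := by
    rw [hδdef, hW₂]
    simp only [sub_mul, mul_sub, smul_sub]
    abel
  obtain ⟨A', B', hA', hB', heq', hA'n, hB'n⟩ :=
    aux_solve V₂ δ (X₂ - A) (Y₂ - B) hV₂ (hX₂.sub hA) (hY₂.sub hB) hδtan
  have hrep : Complex.I • ((A + A') * V₂) - Complex.I • (V₂ * (B + B')) = W₂ := by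
    have e : Complex.I • ((A + A') * V₂) - Complex.I • (V₂ * (B + B'))
        = (Complex.I • (A * V₂) - Complex.I • (V₂ * B))
          + (Complex.I • (A' * V₂) - Complex.I • (V₂ * B')) := by
      simp only [add_mul, mul_add, smul_add]
      abel
    rw [e, heq', hδdef]
    abel
  have hδn : ‖δ‖ ≤ ‖W₂ - W₁‖ + (‖A‖ + ‖B‖) * ‖V₂ - V₁‖ := by
    have hδ2 : δ = (W₂ - W₁)
        + (Complex.I • (A * (V₁ - V₂)) - Complex.I • ((V₁ - V₂) * B)) := by
      rw [hδdef, ← heq1]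
      simp only [mul_sub, sub_mul, smul_sub]
      abel
    rw [hδ2]
    refine (norm_add_le _ _).trans ?_
    have h3 : ‖Complex.I • (A * (V₁ - V₂)) - Complex.I • ((V₁ - V₂) * B)‖
        ≤ ‖A‖ * ‖V₁ - V₂‖ + ‖V₁ - V₂‖ * ‖B‖ := by
      refine (norm_sub_le _ _).trans ?_
      rw [norm_smul, norm_smul, Complex.norm_I, one_mul, one_mul]
      exact add_le_add (norm_mul_le _ _) (norm_mul_le _ _)
    rw [norm_sub_rev V₁ V₂] at h3
    nlinarith [h3]
  have hfin : finslerNorm V₂ W₂ ≤ max ‖A + A'‖ ‖B + B'‖ :=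
    aux_finsler_le V₂ W₂ _ _ (hA.add hA') (hB.add hB') hrep
  have hmax : max ‖A + A'‖ ‖B + B'‖ ≤ max ‖A‖ ‖B‖ + 2 * ‖δ‖ := by
    refine max_le ?_ ?_
    · exact (norm_add_le _ _).trans (by
        have := le_max_left ‖A‖ ‖B‖; linarith [hA'n])
    · exact (norm_add_le _ _).trans (by
        have := le_max_right ‖A‖ ‖B‖; linarith [hB'n])
  have hAr : ‖A‖ ≤ max ‖A‖ ‖B‖ := le_max_left _ _
  have hBr : ‖B‖ ≤ max ‖A‖ ‖B‖ := le_max_right _ _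
  have hΔnn : (0:ℝ) ≤ ‖V₂ - V₁‖ := norm_nonneg _
  have m1 : (‖A‖ + ‖B‖) * ‖V₂ - V₁‖ ≤ (2 * max ‖A‖ ‖B‖) * ‖V₂ - V₁‖ := by
    apply mul_le_mul_of_nonneg_right _ hΔnn
    linarith
  have m2 : max ‖A‖ ‖B‖ * ‖V₂ - V₁‖ ≤ (finslerNorm V₁ W₁ + ε) * ‖V₂ - V₁‖ :=
    mul_le_mul_of_nonneg_right hrlt.le hΔnn
  have expand : (finslerNorm V₁ W₁ + ε) * ‖V₂ - V₁‖
      = finslerNorm V₁ W₁ * ‖V₂ - V₁‖ + ε * ‖V₂ - V₁‖ := by ring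
  have hεD' : ε + 4 * (ε * ‖V₂ - V₁‖) = ε' := by
    rw [← hεD]; ring
  linarith [hfin, hmax, hδn, hrlt.le, m1, m2]

end Aux

section Cont
set_option linter.unusedSectionVars false
set_option maxHeartbeats 1000000

lemma aux_finsler_continuousOn (a b : ℝ) (γ γ' : ℝ → H →L[ℂ] H)
    (hpi : ∀ t ∈ Icc a b, γ t * star (γ t) * γ t = γ t)
    (htan : ∀ t ∈ Icc a b, ∃ X Y : H →L[ℂ] H, IsSelfAdjoint X ∧ IsSelfAdjoint Y ∧
      γ' t = Complex.I • (X * γ t) - Complex.I • (γ t * Y))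
    (hγ : ContinuousOn γ (Icc a b)) (hγ' : ContinuousOn γ' (Icc a b)) :
    ContinuousOn (fun t => finslerNorm (γ t) (γ' t)) (Icc a b) := by
  intro s₀ hs₀
  have hb : ∀ t ∈ Icc a b, |finslerNorm (γ t) (γ' t) - finslerNorm (γ s₀) (γ' s₀)|
      ≤ 2 * ‖γ' t - γ' s₀‖
        + 4 * (finslerNorm (γ s₀) (γ' s₀) + 2 * ‖γ' t‖) * ‖γ t - γ s₀‖ := by
    intro t ht
    have d1 := aux_key_est (γ s₀) (γ' s₀) (γ t) (γ' t) (hpi t ht) (htan s₀ hs₀) (htan t ht)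
    have d2 := aux_key_est (γ t) (γ' t) (γ s₀) (γ' s₀) (hpi s₀ hs₀) (htan t ht) (htan s₀ hs₀)
    rw [norm_sub_rev (γ' s₀) (γ' t), norm_sub_rev (γ s₀) (γ t)] at d2
    have hg0 : 0 ≤ finslerNorm (γ s₀) (γ' s₀) := aux_finsler_nonneg _ _ (htan s₀ hs₀)
    have hgt2 : finslerNorm (γ t) (γ' t) ≤ 2 * ‖γ' t‖ :=
      aux_finsler_le_two_norm _ _ (hpi t ht) (htan t ht)
    have hm : finslerNorm (γ t) (γ' t) * ‖γ t - γ s₀‖ ≤ 2 * ‖γ' t‖ * ‖γ t - γ s₀‖ :=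
      mul_le_mul_of_nonneg_right hgt2 (norm_nonneg _)
    have hnn1 : (0:ℝ) ≤ finslerNorm (γ s₀) (γ' s₀) * ‖γ t - γ s₀‖ :=
      mul_nonneg hg0 (norm_nonneg _)
    have hnn2 : (0:ℝ) ≤ ‖γ' t‖ * ‖γ t - γ s₀‖ :=
      mul_nonneg (norm_nonneg _) (norm_nonneg _)
    rw [abs_sub_le_iff]
    constructor <;> nlinarith [d1, d2, hm, hnn1, hnn2]
  have hc1 : ContinuousWithinAt (fun t => ‖γ' t - γ' s₀‖) (Icc a b) s₀ :=
    ((hγ'.sub continuousOn_const).norm) s₀ hs₀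
  have hc2 : ContinuousWithinAt (fun t => ‖γ t - γ s₀‖) (Icc a b) s₀ :=
    ((hγ.sub continuousOn_const).norm) s₀ hs₀
  have hc3 : ContinuousWithinAt (fun t => ‖γ' t‖) (Icc a b) s₀ := (hγ'.norm) s₀ hs₀
  have hφc : ContinuousWithinAt (fun t => 2 * ‖γ' t - γ' s₀‖
      + 4 * (finslerNorm (γ s₀) (γ' s₀) + 2 * ‖γ' t‖) * ‖γ t - γ s₀‖) (Icc a b) s₀ :=
    (continuousWithinAt_const.mul hc1).add
      (((continuousWithinAt_const.mul
        (continuousWithinAt_const.add (continuousWithinAt_const.mul hc3))).mul hc2))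
  have hφt : Filter.Tendsto (fun t => 2 * ‖γ' t - γ' s₀‖
      + 4 * (finslerNorm (γ s₀) (γ' s₀) + 2 * ‖γ' t‖) * ‖γ t - γ s₀‖)
      (nhdsWithin s₀ (Icc a b)) (nhds 0) := by
    have h0 : (2:ℝ) * ‖γ' s₀ - γ' s₀‖
        + 4 * (finslerNorm (γ s₀) (γ' s₀) + 2 * ‖γ' s₀‖) * ‖γ s₀ - γ s₀‖ = 0 := by simp
    rw [← h0]
    exact hφc
  rw [ContinuousWithinAt, tendsto_iff_dist_tendsto_zero]
  refine squeeze_zero' (Filter.Eventually.of_forall fun t => dist_nonneg) ?_ hφt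
  filter_upwards [self_mem_nhdsWithin] with t ht
  rw [Real.dist_eq]
  exact hb t ht

end Cont


set_option maxHeartbeats 1000000 in
/-- For a `C¹` curve `γ` of partial isometries with tangent derivatives,
the curves of initial projections `t ↦ γ(t)*γ(t)` and final projections `t ↦ γ(t)γ(t)*`
are `C¹` curves of orthogonal projections joining the corresponding endpoints, and their
operator-norm lengths are bounded by the Finsler length of `γ`.  Consequently the maps
`α(V) = V*V` and `ω(V) = VV*` decrease the corresponding path-infimum distances. -/
theorem initial_final_projection_length_decreasing
    (a b : ℝ) (hab : a ≤ b) (γ γ' : ℝ → H →L[ℂ] H)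
    (hpi : ∀ t ∈ Icc a b, γ t * star (γ t) * γ t = γ t)
    (hderiv : ∀ t ∈ Icc a b, HasDerivWithinAt γ (γ' t) (Icc a b) t)
    (hcont : ContinuousOn γ' (Icc a b))
    (htan : ∀ t ∈ Icc a b, ∃ A B : H →L[ℂ] H, IsSelfAdjoint A ∧ IsSelfAdjoint B ∧
      γ' t = Complex.I • (A * γ t) - Complex.I • (γ t * B)) :
    (∀ t ∈ Icc a b,
      IsSelfAdjoint (star (γ t) * γ t) ∧
      (star (γ t) * γ t) * (star (γ t) * γ t) = star (γ t) * γ t ∧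
      IsSelfAdjoint (γ t * star (γ t)) ∧
      (γ t * star (γ t)) * (γ t * star (γ t)) = γ t * star (γ t)) ∧
    (∀ t ∈ Icc a b, HasDerivWithinAt (fun s => star (γ s) * γ s)
      (star (γ' t) * γ t + star (γ t) * γ' t) (Icc a b) t) ∧
    (∀ t ∈ Icc a b, HasDerivWithinAt (fun s => γ s * star (γ s))
      (γ' t * star (γ t) + γ t * star (γ' t)) (Icc a b) t) ∧
    (∫ t in a..b, ‖star (γ' t) * γ t + star (γ t) * γ' t‖) ≤
      (∫ t in a..b, finslerNorm (γ t) (γ' t)) ∧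
    (∫ t in a..b, ‖γ' t * star (γ t) + γ t * star (γ' t)‖) ≤
      ∫ t in a..b, finslerNorm (γ t) (γ' t) := by
  have hγc : ContinuousOn γ (Icc a b) := fun t ht => (hderiv t ht).continuousWithinAt
  have hγsc : ContinuousOn (fun t => star (γ t)) (Icc a b) := hγc.star
  have hγ'sc : ContinuousOn (fun t => star (γ' t)) (Icc a b) := hcont.star
  have hf1c : ContinuousOn (fun t => ‖star (γ' t) * γ t + star (γ t) * γ' t‖) (Icc a b) :=
    ((hγ'sc.mul hγc).add (hγsc.mul hcont)).norm
  have hf2c : ContinuousOn (fun t => ‖γ' t * star (γ t) + γ t * star (γ' t)‖) (Icc a b) :=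
    ((hcont.mul hγsc).add (hγc.mul hγ'sc)).norm
  have hgc : ContinuousOn (fun t => finslerNorm (γ t) (γ' t)) (Icc a b) :=
    aux_finsler_continuousOn a b γ γ' hpi htan hγc hcont
  have hIf1 : IntervalIntegrable (fun t => ‖star (γ' t) * γ t + star (γ t) * γ' t‖)
      MeasureTheory.volume a b := by
    apply ContinuousOn.intervalIntegrable
    rwa [uIcc_of_le hab]
  have hIf2 : IntervalIntegrable (fun t => ‖γ' t * star (γ t) + γ t * star (γ' t)‖)
      MeasureTheory.volume a b := by
    apply ContinuousOn.intervalIntegrable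
    rwa [uIcc_of_le hab]
  have hIg : IntervalIntegrable (fun t => finslerNorm (γ t) (γ' t))
      MeasureTheory.volume a b := by
    apply ContinuousOn.intervalIntegrable
    rwa [uIcc_of_le hab]
  refine ⟨?_, ?_, ?_, ?_, ?_⟩
  · intro t ht
    exact ⟨aux_P_sa (γ t), aux_P_idem (γ t) (hpi t ht),
      aux_Q_sa (γ t), aux_Q_idem (γ t) (hpi t ht)⟩
  · intro t ht
    exact (hderiv t ht).star.mul (hderiv t ht)
  · intro t ht
    exact (hderiv t ht).mul (hderiv t ht).star
  · refine intervalIntegral.integral_mono_on hab hIf1 hIg fun t ht => ?_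
    exact aux_finsler_ge_initial (γ t) (γ' t) (hpi t ht) (htan t ht)
  · refine intervalIntegral.integral_mono_on hab hIf2 hIg fun t ht => ?_
    exact aux_finsler_ge_final (γ t) (γ' t) (hpi t ht) (htan t ht)
end

section
/- Let V be a partial isometry on a complex Hilbert space H and 𝒱 = iXV − iVY with X, Y ∈ B(H) selfadjoint. Then 𝒱*V + V*𝒱 = i(Y V*V − V*V Y) and ‖𝒱*V + V*𝒱‖ ≤ ‖Y‖, and likewise 𝒱V* + V𝒱* = i(X VV* − VV* X) and ‖𝒱V* + V𝒱*‖ ≤ ‖X‖. In particular both ‖𝒱*V + V*𝒱‖ and ‖𝒱V* + V𝒱*‖ are bounded above by the quotient Finsler norm |𝒱|_V. -/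
variable {H : Type*} [NormedAddCommGroup H] [InnerProductSpace ℂ H] [CompleteSpace H]

lemma star_tangent (V A B : H →L[ℂ] H) (hA : IsSelfAdjoint A) (hB : IsSelfAdjoint B) :
    star (Complex.I • (A * V) - Complex.I • (V * B)) =
      Complex.I • (B * star V) - Complex.I • (star V * A) := by
  simp only [star_sub, star_smul, star_mul, hA.star_eq, hB.star_eq, Complex.star_def,
    Complex.conj_I, neg_smul]
  abel

lemma key_id (V A B : H →L[ℂ] H) (hA : IsSelfAdjoint A) (hB : IsSelfAdjoint B) :
    star (Complex.I • (A * V) - Complex.I • (V * B)) * V +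
      star V * (Complex.I • (A * V) - Complex.I • (V * B)) =
      Complex.I • (B * (star V * V) - (star V * V) * B) := by
  rw [star_tangent V A B hA hB]
  rw [sub_mul, mul_sub, smul_mul_assoc, smul_mul_assoc, mul_smul_comm, mul_smul_comm,
    mul_assoc B, mul_assoc (star V), ← mul_assoc (star V) V B, smul_sub]
  abel

lemma comm_bound (P B : H →L[ℂ] H) (hP : P * P = P) (hPsa : IsSelfAdjoint P) :
    ‖B * P - P * B‖ ≤ ‖B‖ := by
  set S : H →L[ℂ] H := P + P - 1 with hS
  have hS2 : S * S = 1 := by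
    rw [hS]
    simp only [sub_mul, mul_sub, add_mul, mul_add, hP, mul_one, one_mul]
    abel
  have hSsa : IsSelfAdjoint S := by
    rw [hS]
    simp only [IsSelfAdjoint, star_sub, star_add, hPsa.star_eq, star_one]
  have hSn : ‖S‖ ≤ 1 := by
    have h1 : ‖star S * S‖ = ‖S‖ * ‖S‖ := CStarRing.norm_star_mul_self
    rw [hSsa.star_eq, hS2] at h1
    have h2 : ‖(1 : H →L[ℂ] H)‖ ≤ 1 := ContinuousLinearMap.norm_id_le
    nlinarith [norm_nonneg S]
  clear_value S
  have hkey : B * S - S * B = S * (S * B * S - B) := by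
    rw [mul_sub, ← mul_assoc, ← mul_assoc, hS2, one_mul]
  have h3 : ‖B * S - S * B‖ ≤ 2 * ‖B‖ := by
    rw [hkey]
    calc ‖S * (S * B * S - B)‖ ≤ ‖S‖ * ‖S * B * S - B‖ := norm_mul_le _ _
    _ ≤ 1 * (‖S * B * S‖ + ‖B‖) := by
        gcongr
        exact norm_sub_le _ _
    _ ≤ 1 * (1 * ‖B‖ * 1 + ‖B‖) := by
        gcongr
        calc ‖S * B * S‖ ≤ ‖S * B‖ * ‖S‖ := norm_mul_le _ _
        _ ≤ ‖S‖ * ‖B‖ * ‖S‖ := by gcongr; exact norm_mul_le _ _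
        _ ≤ 1 * ‖B‖ * 1 := by gcongr
    _ = 2 * ‖B‖ := by ring
  have h4 : (2 : ℂ) • (B * P - P * B) = B * S - S * B := by
    rw [hS]
    simp only [mul_sub, sub_mul, mul_add, add_mul, mul_one, one_mul, two_smul]
    abel
  have h5 : ‖(2 : ℂ) • (B * P - P * B)‖ = 2 * ‖B * P - P * B‖ := by
    rw [norm_smul]
    norm_num
  rw [h4, ] at h5
  linarith [h5 ▸ h3]

lemma main_bound (V B : H →L[ℂ] H) (hV : V * star V * V = V) (hB : IsSelfAdjoint B) :
    ‖Complex.I • (B * (star V * V) - (star V * V) * B)‖ ≤ ‖B‖ := by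
  have hPidem : (star V * V) * (star V * V) = star V * V := by
    calc (star V * V) * (star V * V) = star V * (V * star V * V) := by
          simp only [mul_assoc]
    _ = star V * V := by rw [hV]
  have hPsa : IsSelfAdjoint (star V * V) := by
    simp [IsSelfAdjoint, star_mul]
  have h := comm_bound (star V * V) B hPidem hPsa
  rw [norm_smul, Complex.norm_I, one_mul]
  exact h

/-- For a partial isometry `V` and a tangent vector `𝒱 = iXV − iVY`
(`X`, `Y` selfadjoint), the differentials of the initial- and final-projection maps
satisfy `𝒱*V + V*𝒱 = i[Y, V*V]` with `‖𝒱*V + V*𝒱‖ ≤ ‖Y‖`, and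
`𝒱V* + V𝒱* = i[X, VV*]` with `‖𝒱V* + V𝒱*‖ ≤ ‖X‖`; in particular both norms are
bounded by the quotient Finsler norm `|𝒱|_V`. -/
theorem tangent_maps_initial_final_contractive
    (V X Y : H →L[ℂ] H) (hV : V * star V * V = V)
    (hX : IsSelfAdjoint X) (hY : IsSelfAdjoint Y)
    (𝒱 : H →L[ℂ] H) (h𝒱 : 𝒱 = Complex.I • (X * V) - Complex.I • (V * Y)) :
    star 𝒱 * V + star V * 𝒱 =
      Complex.I • (Y * (star V * V) - (star V * V) * Y) ∧
    ‖star 𝒱 * V + star V * 𝒱‖ ≤ ‖Y‖ ∧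
    𝒱 * star V + V * star 𝒱 =
      Complex.I • (X * (V * star V) - (V * star V) * X) ∧
    ‖𝒱 * star V + V * star 𝒱‖ ≤ ‖X‖ ∧
    ‖star 𝒱 * V + star V * 𝒱‖ ≤ finslerNorm V 𝒱 ∧
    ‖𝒱 * star V + V * star 𝒱‖ ≤ finslerNorm V 𝒱 := by
  have hV' : star V * star (star V) * star V = star V := by
    rw [star_star]
    calc star V * V * star V = star (V * star V * V) := by
          rw [star_mul, star_mul, star_star, mul_assoc]
    _ = star V := by rw [hV]
  -- general helpers for a tangent decomposition iAV - iVB = 𝒱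
  have init_id : ∀ A B : H →L[ℂ] H, IsSelfAdjoint A → IsSelfAdjoint B →
      Complex.I • (A * V) - Complex.I • (V * B) = 𝒱 →
      star 𝒱 * V + star V * 𝒱 =
        Complex.I • (B * (star V * V) - (star V * V) * B) := by
    intro A B hA hB hAB
    rw [← hAB]; exact key_id V A B hA hB
  have final_id : ∀ A B : H →L[ℂ] H, IsSelfAdjoint A → IsSelfAdjoint B →
      Complex.I • (A * V) - Complex.I • (V * B) = 𝒱 →
      𝒱 * star V + V * star 𝒱 =
        Complex.I • (A * (V * star V) - (V * star V) * A) := by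
    intro A B hA hB hAB
    have hstar : Complex.I • (B * star V) - Complex.I • (star V * A) = star 𝒱 := by
      rw [← hAB]; exact (star_tangent V A B hA hB).symm
    have hid := key_id (star V) B A hB hA
    rw [hstar, star_star, star_star] at hid
    exact hid
  have h1 := init_id X Y hX hY h𝒱.symm
  have h2 := final_id X Y hX hY h𝒱.symm
  have hb2' : ∀ A : H →L[ℂ] H, IsSelfAdjoint A →
      ‖Complex.I • (A * (V * star V) - (V * star V) * A)‖ ≤ ‖A‖ := by
    intro A hA
    have h := main_bound (star V) A hV' hA
    rwa [star_star] at h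
  have hb1 : ‖star 𝒱 * V + star V * 𝒱‖ ≤ ‖Y‖ := by
    rw [h1]; exact main_bound V Y hV hY
  have hb2 : ‖𝒱 * star V + V * star 𝒱‖ ≤ ‖X‖ := by
    rw [h2]; exact hb2' X hX
  have hne : {r : ℝ | ∃ A B : H →L[ℂ] H, IsSelfAdjoint A ∧ IsSelfAdjoint B ∧
      Complex.I • (A * V) - Complex.I • (V * B) = 𝒱 ∧ r = max ‖A‖ ‖B‖}.Nonempty :=
    ⟨max ‖X‖ ‖Y‖, X, Y, hX, hY, h𝒱.symm, rfl⟩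
  have hf1 : ‖star 𝒱 * V + star V * 𝒱‖ ≤ finslerNorm V 𝒱 := by
    apply le_csInf hne
    rintro r ⟨A, B, hA, hB, hAB, rfl⟩
    calc ‖star 𝒱 * V + star V * 𝒱‖ ≤ ‖B‖ := by
          rw [init_id A B hA hB hAB]; exact main_bound V B hV hB
    _ ≤ max ‖A‖ ‖B‖ := le_max_right _ _
  have hf2 : ‖𝒱 * star V + V * star 𝒱‖ ≤ finslerNorm V 𝒱 := by
    apply le_csInf hne
    rintro r ⟨A, B, hA, hB, hAB, rfl⟩
    calc ‖𝒱 * star V + V * star 𝒱‖ ≤ ‖A‖ := by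
          rw [final_id A B hA hB hAB]; exact hb2' A hA
    _ ≤ max ‖A‖ ‖B‖ := le_max_left _ _
  exact ⟨h1, hb1, h2, hb2, hf1, hf2⟩
end

section
/- Let P be an orthogonal projection on a complex Hilbert space H and let A, B ∈ B(H) be selfadjoint such that 𝒱 := iAP − iPB satisfies P𝒱P = 0. Define A₀ = PA(1−P) + (1−P)AP and B₀ = PB(1−P) + (1−P)BP. Then A₀, B₀ are selfadjoint, iA₀P − iPB₀ = 𝒱, and for every pair of selfadjoint A′, B′ ∈ B(H) with iA′P − iPB′ = 𝒱 one has ‖A₀‖ ≤ ‖A′‖ and ‖B₀‖ ≤ ‖B′‖. In particular max(‖A₀‖, ‖B₀‖) = |𝒱|_P, i.e. (A₀, B₀) is a minimal lifting of 𝒱 at P. -/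
variable {H : Type*} [NormedAddCommGroup H] [InnerProductSpace ℂ H] [CompleteSpace H]

private lemma I_smul_cancel {M : Type*} [AddCommGroup M] [Module ℂ M]
    {X Y : M} (h : Complex.I • X = Complex.I • Y) : X = Y := by
  have h2 := congrArg (fun T => (-Complex.I) • T) h
  simpa [smul_smul, Complex.I_mul_I] using h2

private lemma corner_left (P X Y : H →L[ℂ] H) (hP2 : P * P = P) :
    (1-P) * (X*P - P*Y) * P = (1-P) * X * P := by
  have e : (1-P) * (X*P - P*Y) * P = (1-P)*X*(P*P) - ((P - P*P)*(Y*P)) := by noncomm_ring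
  rw [e, hP2]; simp [mul_assoc]

private lemma corner_right (P X Y : H →L[ℂ] H) (hP2 : P * P = P) :
    P * (X*P - P*Y) * (1-P) = -(P * Y * (1-P)) := by
  have e : P*(X*P - P*Y)*(1-P) = P*X*(P - P*P) - (P*P)*Y*(1-P) := by noncomm_ring
  rw [e, hP2]; simp

private lemma codiag_sa (P X : H →L[ℂ] H) (hPsa : IsSelfAdjoint P)
    (hX : IsSelfAdjoint X) :
    IsSelfAdjoint (P * X * (1 - P) + (1 - P) * X * P) := by
  show star _ = _
  simp only [star_add, star_mul, star_sub, star_one, hPsa.star_eq, hX.star_eq]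
  noncomm_ring

private lemma codiag_norm_le (P X : H →L[ℂ] H) (hPsa : IsSelfAdjoint P)
    (hP2 : P * P = P) :
    ‖P * X * (1 - P) + (1 - P) * X * P‖ ≤ ‖X‖ := by
  set S : H →L[ℂ] H := P + P - 1 with hS
  have hSsa : star S = S := by
    simp [hS, star_sub, hPsa.star_eq]
  have hS2 : S * S = 1 := by
    have e : S * S = (P*P - P) + (P*P - P) + (P*P - P) + (P*P - P) + 1 := by
      simp only [hS]; noncomm_ring
    rw [e, hP2]; simp
  have hSnorm : ‖S‖ ≤ 1 := by
    have h1 : ‖S‖ * ‖S‖ = ‖(1 : H →L[ℂ] H)‖ := by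
      rw [← CStarRing.norm_star_mul_self, hSsa, hS2]
    have h2 : ‖(1 : H →L[ℂ] H)‖ ≤ 1 := ContinuousLinearMap.norm_id_le
    nlinarith [norm_nonneg S]
  have key : (2:ℝ) • (P * X * (1 - P) + (1 - P) * X * P) = X - S * X * S := by
    rw [two_smul]; simp only [hS]; noncomm_ring
  have h3 : ‖S * X * S‖ ≤ ‖X‖ := by
    have a := norm_mul_le (S*X) S
    have b := norm_mul_le S X
    nlinarith [norm_nonneg S, norm_nonneg X, norm_nonneg (S*X)]
  have h4 : ‖(2:ℝ) • (P * X * (1 - P) + (1 - P) * X * P)‖ ≤ ‖X‖ + ‖X‖ := by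
    rw [key]
    calc ‖X - S*X*S‖ ≤ ‖X‖ + ‖S*X*S‖ := norm_sub_le _ _
      _ ≤ ‖X‖ + ‖X‖ := by linarith
  rw [norm_smul] at h4
  simp at h4
  linarith

/-- Let `P` be an orthogonal projection, `A`, `B` selfadjoint with
`𝒱 = iAP − iPB` satisfying `P𝒱P = 0`.  Then the codiagonal parts
`A₀ = PA(1−P) + (1−P)AP` and `B₀ = PB(1−P) + (1−P)BP` form a lifting of `𝒱` which is
minimal entrywise among all liftings, and `max(‖A₀‖,‖B₀‖) = |𝒱|_P`. -/
theorem codiagonal_minimal_lifting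
    (P A B : H →L[ℂ] H) (hPsa : IsSelfAdjoint P) (hP2 : P * P = P)
    (hA : IsSelfAdjoint A) (hB : IsSelfAdjoint B)
    (𝒱 : H →L[ℂ] H) (h𝒱 : 𝒱 = Complex.I • (A * P) - Complex.I • (P * B))
    (horth : P * 𝒱 * P = 0)
    (A₀ B₀ : H →L[ℂ] H)
    (hA₀ : A₀ = P * A * (1 - P) + (1 - P) * A * P)
    (hB₀ : B₀ = P * B * (1 - P) + (1 - P) * B * P) :
    IsSelfAdjoint A₀ ∧ IsSelfAdjoint B₀ ∧
    Complex.I • (A₀ * P) - Complex.I • (P * B₀) = 𝒱 ∧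
    (∀ A' B' : H →L[ℂ] H, IsSelfAdjoint A' → IsSelfAdjoint B' →
      Complex.I • (A' * P) - Complex.I • (P * B') = 𝒱 →
      ‖A₀‖ ≤ ‖A'‖ ∧ ‖B₀‖ ≤ ‖B'‖) ∧
    max ‖A₀‖ ‖B₀‖ = finslerNorm P 𝒱 := by
  -- P A P = P B P
  have e0 : P * 𝒱 * P = Complex.I • (P*(A*P)) - Complex.I • (P*(B*P)) := by
    rw [h𝒱]
    have e1 : P * (Complex.I • (A*P) - Complex.I • (P*B)) * P
        = Complex.I • (P*(A*P)*P) - Complex.I • (P*(P*B)*P) := by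
      simp [mul_sub, sub_mul, mul_smul_comm, smul_mul_assoc]
    rw [e1]
    congr 1
    · congr 1
      calc P*(A*P)*P = P*(A*(P*P)) := by noncomm_ring
        _ = P*(A*P) := by rw [hP2]
    · congr 1
      calc P*(P*B)*P = (P*P)*(B*P) := by noncomm_ring
        _ = P*(B*P) := by rw [hP2]
  have hPAP : P*(A*P) = P*(B*P) := by
    rw [e0] at horth
    exact I_smul_cancel (sub_eq_zero.mp horth)
  -- selfadjointness
  have hA₀sa : IsSelfAdjoint A₀ := hA₀ ▸ codiag_sa P A hPsa hA
  have hB₀sa : IsSelfAdjoint B₀ := hB₀ ▸ codiag_sa P B hPsa hB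
  -- lifting identity
  have eA : A₀ * P = A*P - P*(A*P) := by
    rw [hA₀]
    have e : (P*A*(1-P) + (1-P)*A*P)*P
        = P*A*(P - P*P) + (A*(P*P) - P*(A*(P*P))) := by noncomm_ring
    rw [e, hP2]; simp
  have eB : P * B₀ = P*B - P*(B*P) := by
    rw [hB₀]
    have e : P * (P*B*(1-P) + (1-P)*B*P)
        = ((P*P)*B - (P*P)*(B*P)) + (P*(B*P) - (P*P)*(B*P)) := by noncomm_ring
    rw [e, hP2]; simp
  have hlift₀ : Complex.I • (A₀ * P) - Complex.I • (P * B₀) = 𝒱 := by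
    rw [eA, eB, h𝒱, hPAP, smul_sub, smul_sub]
    abel
  -- minimality
  have hmin : ∀ A' B' : H →L[ℂ] H, IsSelfAdjoint A' → IsSelfAdjoint B' →
      Complex.I • (A' * P) - Complex.I • (P * B') = 𝒱 →
      ‖A₀‖ ≤ ‖A'‖ ∧ ‖B₀‖ ≤ ‖B'‖ := by
    intro A' B' hA' hB' hlift
    have hE : A'*P - P*B' = A*P - P*B := by
      apply I_smul_cancel
      rw [smul_sub, smul_sub, hlift, h𝒱]
    have hc1 : (1-P)*A'*P = (1-P)*A*P := by
      rw [← corner_left P A' B' hP2, ← corner_left P A B hP2, hE]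
    have hc2 : P*B'*(1-P) = P*B*(1-P) := by
      have := corner_right P A' B' hP2
      rw [hE, corner_right P A B hP2] at this
      exact neg_injective this.symm
    -- star versions
    have hc1' : P*A'*(1-P) = P*A*(1-P) := by
      have h2 := congrArg star hc1
      simp only [star_mul, star_sub, star_one, hPsa.star_eq, hA.star_eq,
        hA'.star_eq] at h2
      rw [mul_assoc, mul_assoc]
      simpa [mul_assoc] using h2
    have hc2' : (1-P)*B'*P = (1-P)*B*P := by
      have h2 := congrArg star hc2
      simp only [star_mul, star_sub, star_one, hPsa.star_eq, hB.star_eq,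
        hB'.star_eq] at h2
      rw [mul_assoc, mul_assoc]
      simpa [mul_assoc] using h2
    have hA₀' : A₀ = P * A' * (1 - P) + (1 - P) * A' * P := by
      rw [hA₀, hc1', hc1]
    have hB₀' : B₀ = P * B' * (1 - P) + (1 - P) * B' * P := by
      rw [hB₀, hc2', hc2]
    exact ⟨hA₀' ▸ codiag_norm_le P A' hPsa hP2,
      hB₀' ▸ codiag_norm_le P B' hPsa hP2⟩
  refine ⟨hA₀sa, hB₀sa, hlift₀, hmin, ?_⟩
  -- finsler norm equality
  have hmem : max ‖A₀‖ ‖B₀‖ ∈ { r : ℝ | ∃ A' B' : H →L[ℂ] H, IsSelfAdjoint A' ∧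
      IsSelfAdjoint B' ∧ Complex.I • (A' * P) - Complex.I • (P * B') = 𝒱 ∧
      r = max ‖A'‖ ‖B'‖ } := ⟨A₀, B₀, hA₀sa, hB₀sa, hlift₀, rfl⟩
  have hbdd : BddBelow { r : ℝ | ∃ A' B' : H →L[ℂ] H, IsSelfAdjoint A' ∧
      IsSelfAdjoint B' ∧ Complex.I • (A' * P) - Complex.I • (P * B') = 𝒱 ∧
      r = max ‖A'‖ ‖B'‖ } := by
    refine ⟨0, ?_⟩
    rintro r ⟨A', B', -, -, -, rfl⟩
    exact le_trans (norm_nonneg A') (le_max_left _ _)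
  apply le_antisymm
  · apply le_csInf ⟨_, hmem⟩
    rintro r ⟨A', B', h1, h2, h3, rfl⟩
    obtain ⟨m1, m2⟩ := hmin A' B' h1 h2 h3
    exact max_le_max m1 m2
  · exact csInf_le hbdd hmem
end

section
/- Let V be a balanced partial isometry on a complex Hilbert space H and let 𝒱 = iXV − iVY (X, Y selfadjoint) be a tangent vector at V which is orthogonal at V, i.e. VV*·𝒱·V*V = 0. Then the quotient Finsler norm of 𝒱 equals its operator norm: |𝒱|_V = ‖𝒱‖. -/
variable {H : Type*} [NormedAddCommGroup H] [InnerProductSpace ℂ H] [CompleteSpace H]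

/-!
Let `P = V*V` and `Q = VV*`. Any tangent vector `W = i(AV - VB)` satisfies
`(1 - Q) W (1 - P) = 0`, and orthogonality is `Q W P = 0`, so `W` maps `range P` into
`(range Q)ᗮ` and `(range P)ᗮ` into `range Q`. For such an operator
`‖W‖ ≤ max ‖WP‖ ‖W(1 - P)‖` by Pythagoras, and here `WP = i(1 - Q)AV`,
`W(1 - P) = -iVB(1 - P)`, so `‖W‖ ≤ max ‖A‖ ‖B‖` for every lift `(A, B)` of `W`.
Conversely `A = i(VW* - WV*)`, `B = i(V*W - W*V)` is a selfadjoint lift of `W`, and the same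
block argument (now with respect to `Q`, resp. `P`, on both sides) gives `‖A‖, ‖B‖ ≤ ‖W‖`.
-/

open Complex ContinuousLinearMap

section OffDiagonal

variable {𝕜 E F : Type*} [RCLike 𝕜] [NormedAddCommGroup E] [InnerProductSpace 𝕜 E]
  [CompleteSpace E] {p : E →L[𝕜] E}

namespace IsStarProjection

theorem apply_apply (hp : IsStarProjection p) (x : E) : p (p x) = p x :=
  congr($(hp.isIdempotentElem.eq) x)

theorem inner_apply_one_sub_apply (hp : IsStarProjection p) (x y : E) :
    inner 𝕜 (p x) ((1 - p) y) = 0 := by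
  rw [← adjoint_inner_right, ← star_eq_adjoint, hp.isSelfAdjoint.star_eq, ← mul_apply_eq_comp,
    hp.mul_one_sub_self, zero_apply, inner_zero_right]

theorem norm_sq_add_norm_one_sub_sq (hp : IsStarProjection p) (x : E) :
    ‖p x‖ ^ 2 + ‖(1 - p) x‖ ^ 2 = ‖x‖ ^ 2 := by
  have h := norm_add_sq_eq_norm_sq_add_norm_sq_of_inner_eq_zero _ _
    (hp.inner_apply_one_sub_apply x x)
  rw [sub_apply, one_apply_eq_self, add_sub_cancel] at h
  rw [sub_apply, one_apply_eq_self, sq, sq, sq, h]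

variable [NormedAddCommGroup F] [InnerProductSpace 𝕜 F]

theorem norm_apply_le (hp : IsStarProjection p) (M : E →L[𝕜] F) (x : E) :
    ‖M (p x)‖ ≤ ‖M ∘L p‖ * ‖p x‖ := by
  simpa only [comp_apply, hp.apply_apply] using (M ∘L p).le_opNorm (p x)

end IsStarProjection

variable [NormedAddCommGroup F] [InnerProductSpace 𝕜 F] [CompleteSpace F]

theorem ContinuousLinearMap.norm_le_max_of_offDiagonal {q : F →L[𝕜] F}
    (hp : IsStarProjection p) (hq : IsStarProjection q) {M : E →L[𝕜] F}
    (h₁ : q ∘L M ∘L p = 0) (h₂ : (1 - q) ∘L M ∘L (1 - p) = 0) :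
    ‖M‖ ≤ max ‖M ∘L p‖ ‖M ∘L (1 - p)‖ := by
  set c := max ‖M ∘L p‖ ‖M ∘L (1 - p)‖
  have hc : 0 ≤ c := le_max_of_le_left (norm_nonneg _)
  refine opNorm_le_bound _ hc fun x ↦ ?_
  have hsplit : M x = M (p x) + M ((1 - p) x) := by
    rw [← map_add, sub_apply, one_apply_eq_self, add_sub_cancel]
  have horth : inner 𝕜 (M ((1 - p) x)) (M (p x)) = 0 := by
    have e₁ := congr($h₁ x)
    have e₂ := congr($h₂ x)
    simp only [comp_apply, zero_apply] at e₁ e₂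
    set y := M ((1 - p) x)
    have e₁' : (1 - q) (M (p x)) = M (p x) := by rw [sub_apply, one_apply_eq_self, e₁, sub_zero]
    have e₂' : q y = y := by rwa [sub_apply, one_apply_eq_self, sub_eq_zero, eq_comm] at e₂
    rw [← e₁', ← e₂']
    exact hq.inner_apply_one_sub_apply _ _
  have hsq : ‖M x‖ ^ 2 ≤ (c * ‖x‖) ^ 2 := calc
    ‖M x‖ ^ 2 = ‖M (p x)‖ ^ 2 + ‖M ((1 - p) x)‖ ^ 2 := by
      rw [hsplit, sq, sq, sq, norm_add_sq_eq_norm_sq_add_norm_sq_of_inner_eq_zero _ _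
        (inner_eq_zero_symm.mp horth)]
    _ ≤ (c * ‖p x‖) ^ 2 + (c * ‖(1 - p) x‖) ^ 2 := by
      gcongr
      · exact (hp.norm_apply_le M x).trans (by gcongr; exact le_max_left _ _)
      · exact (hp.one_sub.norm_apply_le M x).trans (by gcongr; exact le_max_right _ _)
    _ = (c * ‖x‖) ^ 2 := by
      rw [mul_pow, mul_pow, mul_pow, ← mul_add, hp.norm_sq_add_norm_one_sub_sq]
  exact le_of_pow_le_pow_left₀ two_ne_zero (by positivity) hsq

end OffDiagonal

theorem norm_mul_mul_le_of_norm_le_one {R : Type*} [NonUnitalSeminormedRing R] {x z : R}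
    (hx : ‖x‖ ≤ 1) (hz : ‖z‖ ≤ 1) (y : R) : ‖x * y * z‖ ≤ ‖y‖ :=
  calc ‖x * y * z‖ ≤ ‖x‖ * ‖y‖ * ‖z‖ := norm_mul₃_le
    _ ≤ 1 * ‖y‖ * 1 := by gcongr
    _ = ‖y‖ := by rw [one_mul, mul_one]

section StarRing

variable {R : Type*} [Ring R] [StarRing R] {v w : R}

theorem mul_star_self_mul_add_mul_star_mul_self
    (horth : v * star v * w * (star v * v) = 0)
    (hcorner : (1 - v * star v) * w * (1 - star v * v) = 0) :
    v * star v * w + w * (star v * v) = w := by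
  have key : w - (v * star v * w + w * (star v * v)) =
      (1 - v * star v) * w * (1 - star v * v) - v * star v * w * (star v * v) := by noncomm_ring
  rwa [hcorner, horth, sub_zero, sub_eq_zero, eq_comm] at key

theorem star_mul_self_mul_star_mul_mul_star_self (horth : v * star v * w * (star v * v) = 0) :
    star v * v * star w * (v * star v) = 0 := by
  simpa only [star_mul, star_star, star_zero, mul_assoc] using congrArg star horth

end StarRing

def IsPartialIsometry {R : Type*} [Mul R] [Star R] (v : R) : Prop :=
  v * star v * v = v

namespace IsPartialIsometry

section Ring

variable {R : Type*} [Ring R] [StarRing R] {v w : R}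

protected theorem eq (h : IsPartialIsometry v) : v * star v * v = v := h

protected theorem star (h : IsPartialIsometry v) : IsPartialIsometry (star v) := by
  simpa only [IsPartialIsometry, star_mul, star_star, mul_assoc] using congrArg star h

theorem mul_star_mul_self (h : IsPartialIsometry v) : v * (star v * v) = v := by
  rw [← mul_assoc, h.eq]

theorem star_mul_mul_star_self (h : IsPartialIsometry v) : star v * (v * star v) = star v := by
  simpa only [star_star] using h.star.mul_star_mul_self

theorem isStarProjection_mul_star_self (h : IsPartialIsometry v) :
    IsStarProjection (v * star v) :=
  ⟨by rw [IsIdempotentElem, ← mul_assoc, h.eq], IsSelfAdjoint.mul_star_self v⟩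

theorem isStarProjection_star_mul_self (h : IsPartialIsometry v) :
    IsStarProjection (star v * v) := by
  simpa only [star_star] using h.star.isStarProjection_mul_star_self

theorem one_sub_mul_star_self_mul (h : IsPartialIsometry v) : (1 - v * star v) * v = 0 := by
  rw [sub_mul, one_mul, h.eq, sub_self]

theorem mul_one_sub_star_mul_self (h : IsPartialIsometry v) : v * (1 - star v * v) = 0 := by
  rw [mul_sub, mul_one, h.mul_star_mul_self, sub_self]

theorem star_mul_one_sub_mul_star_self (h : IsPartialIsometry v) :
    star v * (1 - v * star v) = 0 := by
  simpa only [star_star] using h.star.mul_one_sub_star_mul_self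

theorem mul_star_mul_eq_zero (h : IsPartialIsometry v)
    (horth : v * star v * w * (star v * v) = 0) : v * star w * v = 0 :=
  calc v * star w * v = v * (star v * v) * star w * (v * star v * v) := by
        rw [h.mul_star_mul_self, h.eq]
    _ = v * (star v * v * star w * (v * star v)) * v := by simp only [mul_assoc]
    _ = 0 := by rw [star_mul_self_mul_star_mul_mul_star_self horth, mul_zero, zero_mul]

end Ring

theorem norm_le_one {R : Type*} [NormedRing R] [StarRing R] [CStarRing R] {v : R}
    (h : IsPartialIsometry v) : ‖v‖ ≤ 1 := by
  have := h.isStarProjection_star_mul_self.norm_le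
  rw [CStarRing.norm_star_mul_self] at this
  nlinarith [norm_nonneg v]

end IsPartialIsometry

section Tangent

variable {A : Type*} [Ring A] [StarRing A] [Algebra ℂ A]

noncomputable def tangentLift (v w : A) : A := I • (v * star w - w * star v)

theorem isSelfAdjoint_tangentLift [StarModule ℂ A] (v w : A) :
    IsSelfAdjoint (tangentLift v w) := by
  simp only [IsSelfAdjoint, tangentLift, star_smul, star_sub, star_mul, star_star, star_def,
    conj_I, neg_smul, ← smul_neg, neg_sub]

namespace IsPartialIsometry

variable {v a b w : A}

theorem one_sub_mul_tangent (h : IsPartialIsometry v) (hw : I • (a * v) - I • (v * b) = w) :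
    (1 - v * star v) * w = I • ((1 - v * star v) * a * v) := by
  rw [← hw, mul_sub, mul_smul_comm, mul_smul_comm, ← mul_assoc, ← mul_assoc,
    h.one_sub_mul_star_self_mul, zero_mul, smul_zero, sub_zero]

theorem tangent_mul_one_sub (h : IsPartialIsometry v) (hw : I • (a * v) - I • (v * b) = w) :
    w * (1 - star v * v) = -(I • (v * b * (1 - star v * v))) := by
  rw [← hw, sub_mul, smul_mul_assoc, smul_mul_assoc, mul_assoc a, h.mul_one_sub_star_mul_self,
    mul_zero, smul_zero, zero_sub]

theorem tangent_corner_eq_zero (h : IsPartialIsometry v) (hw : I • (a * v) - I • (v * b) = w) :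
    (1 - v * star v) * w * (1 - star v * v) = 0 := by
  rw [h.one_sub_mul_tangent hw, smul_mul_assoc, mul_assoc _ v, h.mul_one_sub_star_mul_self,
    mul_zero, smul_zero]

theorem tangent_mul_star_mul_self (h : IsPartialIsometry v) (hw : I • (a * v) - I • (v * b) = w)
    (horth : v * star v * w * (star v * v) = 0) :
    w * (star v * v) = I • ((1 - v * star v) * a * v) :=
  calc w * (star v * v) = (1 - v * star v) * w * (star v * v) := by
        rw [sub_mul, sub_mul, horth, one_mul, sub_zero]
    _ = _ := by rw [h.one_sub_mul_tangent hw, smul_mul_assoc, mul_assoc _ v, h.mul_star_mul_self]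

theorem tangentLift_represents (h : IsPartialIsometry v)
    (horth : v * star v * w * (star v * v) = 0)
    (hcorner : (1 - v * star v) * w * (1 - star v * v) = 0) :
    I • (tangentLift v w * v) - I • (v * tangentLift (star v) (star w)) = w := by
  have hvwv : v * (star w * v) = 0 := by rw [← mul_assoc, h.mul_star_mul_eq_zero horth]
  conv_rhs => rw [← mul_star_self_mul_add_mul_star_mul_self horth hcorner]
  simp only [tangentLift, star_star, smul_mul_assoc, mul_smul_comm, smul_smul, I_mul_I,
    sub_mul, mul_sub, mul_assoc, hvwv, neg_one_smul, zero_sub, sub_zero, neg_neg]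
  abel

theorem tangentLift_mul_mul_star_self (h : IsPartialIsometry v)
    (horth : v * star v * w * (star v * v) = 0) :
    tangentLift v w * (v * star v) = -(I • (w * star v)) := by
  rw [tangentLift, smul_mul_assoc, sub_mul, mul_assoc w, h.star_mul_mul_star_self, ← mul_assoc,
    h.mul_star_mul_eq_zero horth, zero_mul, zero_sub, smul_neg]

theorem tangentLift_mul_one_sub (h : IsPartialIsometry v) :
    tangentLift v w * (1 - v * star v) = I • (v * star w * (1 - v * star v)) := by
  rw [tangentLift, smul_mul_assoc, sub_mul, mul_assoc w, h.star_mul_one_sub_mul_star_self,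
    mul_zero, sub_zero]

theorem mul_star_self_mul_tangentLift_mul_mul_star_self (h : IsPartialIsometry v)
    (horth : v * star v * w * (star v * v) = 0) :
    v * star v * tangentLift v w * (v * star v) = 0 := by
  have hQwv : v * star v * (w * star v) = 0 :=
    calc v * star v * (w * star v) = v * star v * w * (star v * v) * star v := by
          simp only [mul_assoc, h.star_mul_mul_star_self]
      _ = 0 := by rw [horth, zero_mul]
  rw [mul_assoc, h.tangentLift_mul_mul_star_self horth, mul_neg, mul_smul_comm, hQwv, smul_zero,
    neg_zero]

theorem one_sub_mul_tangentLift_mul_one_sub (h : IsPartialIsometry v) :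
    (1 - v * star v) * tangentLift v w * (1 - v * star v) = 0 := by
  rw [mul_assoc, h.tangentLift_mul_one_sub, mul_smul_comm, ← mul_assoc, ← mul_assoc,
    h.one_sub_mul_star_self_mul, zero_mul, zero_mul, smul_zero]

end IsPartialIsometry

end Tangent

namespace IsPartialIsometry

variable {V W : H →L[ℂ] H}

theorem norm_le_max_of_tangent (h : IsPartialIsometry V) {A B : H →L[ℂ] H}
    (hW : I • (A * V) - I • (V * B) = W) (horth : V * star V * W * (star V * V) = 0) :
    ‖W‖ ≤ max ‖A‖ ‖B‖ := by
  have hQ := h.isStarProjection_mul_star_self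
  have hR := h.isStarProjection_star_mul_self
  refine (norm_le_max_of_offDiagonal hR hQ (M := W)
    (by simpa only [mul_def, comp_assoc] using horth)
    (by simpa only [mul_def, comp_assoc] using h.tangent_corner_eq_zero hW)).trans
    (max_le_max ?_ ?_)
  · change ‖W * (star V * V)‖ ≤ ‖A‖
    rw [h.tangent_mul_star_mul_self hW horth, norm_smul, norm_I, one_mul]
    exact norm_mul_mul_le_of_norm_le_one hQ.one_sub.norm_le h.norm_le_one A
  · change ‖W * (1 - star V * V)‖ ≤ ‖B‖
    rw [h.tangent_mul_one_sub hW, norm_neg, norm_smul, norm_I, one_mul]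
    exact norm_mul_mul_le_of_norm_le_one h.norm_le_one hR.one_sub.norm_le B

theorem norm_tangentLift_le (h : IsPartialIsometry V)
    (horth : V * star V * W * (star V * V) = 0) : ‖tangentLift V W‖ ≤ ‖W‖ := by
  have hQ := h.isStarProjection_mul_star_self
  refine (norm_le_max_of_offDiagonal hQ hQ (M := tangentLift V W)
    (by simpa only [mul_def, comp_assoc] using
      h.mul_star_self_mul_tangentLift_mul_mul_star_self horth)
    (by simpa only [mul_def, comp_assoc] using
      h.one_sub_mul_tangentLift_mul_one_sub)).trans (max_le ?_ ?_)
  · change ‖tangentLift V W * (V * star V)‖ ≤ ‖W‖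
    rw [h.tangentLift_mul_mul_star_self horth, norm_neg, norm_smul, norm_I, one_mul]
    calc ‖W * star V‖ ≤ ‖W‖ * ‖star V‖ := norm_mul_le _ _
      _ ≤ ‖W‖ := mul_le_of_le_one_right (norm_nonneg _) (by rw [norm_star]; exact h.norm_le_one)
  · change ‖tangentLift V W * (1 - V * star V)‖ ≤ ‖W‖
    rw [h.tangentLift_mul_one_sub, norm_smul, norm_I, one_mul, ← norm_star W]
    exact norm_mul_mul_le_of_norm_le_one h.norm_le_one hQ.one_sub.norm_le _

end IsPartialIsometry

theorem finslerNorm_eq_opNorm_of_orthogonal_general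
    (V X Y : H →L[ℂ] H) (hV : V * star V * V = V)
    (𝒱 : H →L[ℂ] H) (h𝒱 : 𝒱 = Complex.I • (X * V) - Complex.I • (V * Y))
    (horth : (V * star V) * 𝒱 * (star V * V) = 0) :
    finslerNorm V 𝒱 = ‖𝒱‖ := by
  have hV : IsPartialIsometry V := hV
  have hrep := hV.tangentLift_represents horth (hV.tangent_corner_eq_zero h𝒱.symm)
  have horth_star : star V * star (star V) * star 𝒱 * (star (star V) * star V) = 0 := by
    simpa only [star_star] using star_mul_self_mul_star_mul_mul_star_self horth
  have hlift : max ‖tangentLift V 𝒱‖ ‖tangentLift (star V) (star 𝒱)‖ = ‖𝒱‖ :=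
    le_antisymm (max_le (hV.norm_tangentLift_le horth)
      (norm_star 𝒱 ▸ hV.star.norm_tangentLift_le horth_star))
      (hV.norm_le_max_of_tangent hrep horth)
  refine IsLeast.csInf_eq ⟨⟨_, _, isSelfAdjoint_tangentLift _ _, isSelfAdjoint_tangentLift _ _,
    hrep, hlift.symm⟩, ?_⟩
  rintro r ⟨A, B, -, -, hAB, rfl⟩
  exact hV.norm_le_max_of_tangent hAB horth

/-- Let `V` be a balanced partial isometry (i.e. `V = U P W*` with
`U`, `W` unitary and `P` an orthogonal projection) and `𝒱 = iXV − iVY` a tangent vector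
at `V` which is orthogonal at `V`, i.e. `VV* 𝒱 V*V = 0`.  Then `|𝒱|_V = ‖𝒱‖`. -/
theorem finslerNorm_eq_opNorm_of_orthogonal
    (V X Y : H →L[ℂ] H) (hV : V * star V * V = V)
    (hbal : ∃ U W P : H →L[ℂ] H, U ∈ unitary (H →L[ℂ] H) ∧ W ∈ unitary (H →L[ℂ] H) ∧
      IsSelfAdjoint P ∧ P * P = P ∧ V = U * P * star W)
    (hX : IsSelfAdjoint X) (hY : IsSelfAdjoint Y)
    (𝒱 : H →L[ℂ] H) (h𝒱 : 𝒱 = Complex.I • (X * V) - Complex.I • (V * Y))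
    (horth : (V * star V) * 𝒱 * (star V * V) = 0) :
    finslerNorm V 𝒱 = ‖𝒱‖ :=
  finslerNorm_eq_opNorm_of_orthogonal_general V X Y hV 𝒱 h𝒱 horth
end

section
/- Let V be a partial isometry on a complex Hilbert space H, let 𝒱 = iXV − iVY with X, Y ∈ B(H) selfadjoint, and let U, W ∈ B(H) be unitaries. Then UVW* is a partial isometry, U𝒱W* is a tangent vector at UVW* (i.e. U𝒱W* = iA(UVW*) − i(UVW*)B for some selfadjoint A, B), and the quotient Finsler norm is invariant under the action: |U𝒱W*|_{UVW*} = |𝒱|_V. -/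
variable {H : Type*} [NormedAddCommGroup H] [InnerProductSpace ℂ H] [CompleteSpace H]

/-- Let `V` be a partial isometry, `𝒱 = iXV − iVY` a tangent vector
at `V`, and `U`, `W` unitaries.  Then `UVW*` is a partial isometry, `U𝒱W*` is a tangent
vector at `UVW*`, and the quotient Finsler norm is invariant:
`|U𝒱W*|_{UVW*} = |𝒱|_V`. -/
theorem finslerNorm_invariant_under_action
    (V X Y U W : H →L[ℂ] H) (hV : V * star V * V = V)
    (hX : IsSelfAdjoint X) (hY : IsSelfAdjoint Y)
    (𝒱 : H →L[ℂ] H) (h𝒱 : 𝒱 = Complex.I • (X * V) - Complex.I • (V * Y))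
    (hU : U ∈ unitary (H →L[ℂ] H)) (hW : W ∈ unitary (H →L[ℂ] H)) :
    (U * V * star W) * star (U * V * star W) * (U * V * star W) = U * V * star W ∧
    (∃ A B : H →L[ℂ] H, IsSelfAdjoint A ∧ IsSelfAdjoint B ∧
      U * 𝒱 * star W =
        Complex.I • (A * (U * V * star W)) - Complex.I • ((U * V * star W) * B)) ∧
    finslerNorm (U * V * star W) (U * 𝒱 * star W) = finslerNorm V 𝒱 := by
  obtain ⟨hU1, hU2⟩ := Unitary.mem_iff.mp hU
  obtain ⟨hW1, hW2⟩ := Unitary.mem_iff.mp hW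
  have hnorm : ∀ a : H →L[ℂ] H, ‖U * a * star W‖ = ‖a‖ := by
    intro a
    rw [mul_assoc, CStarRing.norm_coe_unitary_mul ⟨U, hU⟩ (a * star W),
      CStarRing.norm_mul_coe_unitary a ⟨star W, Unitary.star_mem hW⟩]
  have hnorm' : ∀ a : H →L[ℂ] H, ‖star U * a * W‖ = ‖a‖ := by
    intro a
    rw [mul_assoc, CStarRing.norm_coe_unitary_mul ⟨star U, Unitary.star_mem hU⟩ (a * W),
      CStarRing.norm_mul_coe_unitary a ⟨W, hW⟩]
  refine ⟨?_, ?_, ?_⟩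
  · have : (U * V * star W) * star (U * V * star W) * (U * V * star W)
        = U * (V * star V * V) * star W := by
      simp only [star_mul, star_star]
      calc U * V * star W * (W * star V * star U) * (U * V * star W)
          = U * V * (star W * W) * star V * (star U * U) * V * star W := by
            noncomm_ring
        _ = U * (V * star V * V) * star W := by rw [hW1, hU1]; noncomm_ring
    rw [this, hV]
  · refine ⟨U * X * star U, W * Y * star W, ?_, ?_, ?_⟩
    · simp only [IsSelfAdjoint, star_mul, star_star, hX.star_eq, mul_assoc]
    · simp only [IsSelfAdjoint, star_mul, star_star, hY.star_eq, mul_assoc]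
    · rw [h𝒱]
      have e1 : U * X * star U * (U * V * star W) = U * (X * V) * star W := by
        calc U * X * star U * (U * V * star W)
            = U * X * (star U * U) * V * star W := by noncomm_ring
          _ = U * (X * V) * star W := by rw [hU1]; noncomm_ring
      have e2 : U * V * star W * (W * Y * star W) = U * (V * Y) * star W := by
        calc U * V * star W * (W * Y * star W)
            = U * V * (star W * W) * Y * star W := by noncomm_ring
          _ = U * (V * Y) * star W := by rw [hW1]; noncomm_ring
      rw [e1, e2]
      simp only [sub_mul, mul_sub, mul_smul_comm, smul_mul_assoc]
  · unfold finslerNorm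
    congr 1
    ext r
    constructor
    · rintro ⟨A, B, hA, hB, heq, hr⟩
      refine ⟨star U * A * U, star W * B * W, ?_, ?_, ?_, ?_⟩
      · simp only [IsSelfAdjoint, star_mul, star_star, hA.star_eq, mul_assoc]
      · simp only [IsSelfAdjoint, star_mul, star_star, hB.star_eq, mul_assoc]
      · have := congrArg (fun T => star U * T * W) heq
        have e1 : star U * (Complex.I • (A * (U * V * star W)) -
            Complex.I • (U * V * star W * B)) * W
            = Complex.I • (star U * A * U * (V * (star W * W))) -
              Complex.I • ((star U * U) * (V * (star W * B * W))) := by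
          simp only [mul_sub, sub_mul, mul_smul_comm, smul_mul_assoc]
          congr 1 <;> congr 1 <;> noncomm_ring
        rw [e1, hU1, hW1] at this
        have e2 : star U * (U * 𝒱 * star W) * W
            = (star U * U) * 𝒱 * (star W * W) := by noncomm_ring
        rw [e2, hU1, hW1] at this
        simp only [mul_one, one_mul] at this
        rw [← this]
      · have h1 : ‖star U * A * U‖ = ‖A‖ := by
          rw [mul_assoc, CStarRing.norm_coe_unitary_mul ⟨star U, Unitary.star_mem hU⟩ (A * U),
            CStarRing.norm_mul_coe_unitary A ⟨U, hU⟩]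
        have h2 : ‖star W * B * W‖ = ‖B‖ := by
          rw [mul_assoc, CStarRing.norm_coe_unitary_mul ⟨star W, Unitary.star_mem hW⟩ (B * W),
            CStarRing.norm_mul_coe_unitary B ⟨W, hW⟩]
        rw [hr, h1, h2]
    · rintro ⟨A, B, hA, hB, heq, hr⟩
      refine ⟨U * A * star U, W * B * star W, ?_, ?_, ?_, ?_⟩
      · simp only [IsSelfAdjoint, star_mul, star_star, hA.star_eq, mul_assoc]
      · simp only [IsSelfAdjoint, star_mul, star_star, hB.star_eq, mul_assoc]
      · have e1 : U * A * star U * (U * V * star W)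
            = U * (A * V) * star W := by
          calc U * A * star U * (U * V * star W)
              = U * A * (star U * U) * V * star W := by noncomm_ring
            _ = U * (A * V) * star W := by rw [hU1]; noncomm_ring
        have e2 : U * V * star W * (W * B * star W)
            = U * (V * B) * star W := by
          calc U * V * star W * (W * B * star W)
              = U * V * (star W * W) * B * star W := by noncomm_ring
            _ = U * (V * B) * star W := by rw [hW1]; noncomm_ring
        rw [e1, e2, ← heq]
        simp only [sub_mul, mul_sub, mul_smul_comm, smul_mul_assoc]
      · have h1 : ‖U * A * star U‖ = ‖A‖ := by
          rw [mul_assoc, CStarRing.norm_coe_unitary_mul ⟨U, hU⟩ (A * star U),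
            CStarRing.norm_mul_coe_unitary A ⟨star U, Unitary.star_mem hU⟩]
        have h2 : ‖W * B * star W‖ = ‖B‖ := by
          rw [mul_assoc, CStarRing.norm_coe_unitary_mul ⟨W, hW⟩ (B * star W),
            CStarRing.norm_mul_coe_unitary B ⟨star W, Unitary.star_mem hW⟩]
        rw [hr, h1, h2]
end
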